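/- Let (Ω, F, P) be a probability space with a filtration (G_k^n)_{k≥0} for each n, and for each n let ξ_1^n, ..., ξ_{K_n}^n be nonnegative random variables with ξ_k^n measurable with respect to G_k^n. Suppose Σ_{k=1}^{K_n} E[ξ_k^n | G_{k−1}^n] → R in probability for some random variable R, and Σ_{k=1}^{K_n} E[(ξ_k^n)² | G_{k−1}^n] → 0 in probability. Then Σ_{k=1}^{K_n} ξ_k^n → R in probability. -/

import Mathlib

open MeasureTheory Filter Topology

section AuxLLN

variable {Ω : Type*} [m0 : MeasurableSpace Ω] {μ : Measure Ω} [IsProbabilityMeasure μ]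

private lemma aux_sum_if_le (ε : ℝ) (hε : 0 ≤ ε) (a : ℕ → ℝ) :
    ∀ K : ℕ, (∀ k ∈ Finset.Icc 1 K, 0 ≤ a k) →
      (∑ k ∈ Finset.Icc 1 K, (if (∑ j ∈ Finset.Icc 1 k, a j) ≤ ε then a k else 0)) ≤ ε ∧
      (∑ k ∈ Finset.Icc 1 K, (if (∑ j ∈ Finset.Icc 1 k, a j) ≤ ε then a k else 0)) ≤
        ∑ j ∈ Finset.Icc 1 K, a j := by
  intro K
  induction K with
  | zero => intro _; simp [hε]
  | succ K ih =>
    intro ha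
    have h1K : (1:ℕ) ≤ K + 1 := by omega
    have haK : ∀ k ∈ Finset.Icc 1 K, 0 ≤ a k := by
      intro k hk
      refine ha k (Finset.mem_Icc.mpr ⟨(Finset.mem_Icc.mp hk).1, by
        have := (Finset.mem_Icc.mp hk).2; omega⟩)
    obtain ⟨ih1, ih2⟩ := ih haK
    have haK1 : 0 ≤ a (K + 1) := ha (K + 1) (Finset.mem_Icc.mpr ⟨by omega, le_rfl⟩)
    by_cases hc : (∑ j ∈ Finset.Icc 1 (K + 1), a j) ≤ ε
    · constructor
      · rw [Finset.sum_Icc_succ_top h1K, if_pos hc]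
        have := Finset.sum_Icc_succ_top h1K a
        linarith
      · rw [Finset.sum_Icc_succ_top h1K, if_pos hc, Finset.sum_Icc_succ_top h1K]
        linarith
    · constructor
      · rw [Finset.sum_Icc_succ_top h1K, if_neg hc]; linarith
      · rw [Finset.sum_Icc_succ_top h1K, if_neg hc, Finset.sum_Icc_succ_top h1K]
        linarith

private lemma integrable_mul_memLp_two {f g : Ω → ℝ} (hf : MemLp f 2 μ) (hg : MemLp g 2 μ) :
    Integrable (fun ω => f ω * g ω) μ := by
  have hint : Integrable (fun ω => (f ω ^ 2 + g ω ^ 2) / 2) μ :=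
    (hf.integrable_sq.add hg.integrable_sq).div_const 2
  refine hint.mono' (hf.1.mul hg.1) (Filter.Eventually.of_forall fun ω => ?_)
  rw [Real.norm_eq_abs, abs_mul]
  nlinarith [sq_nonneg (|f ω| - |g ω|), sq_abs (f ω), sq_abs (g ω), abs_nonneg (f ω),
    abs_nonneg (g ω)]

private lemma memLp_two_condexp {G : ℕ → MeasurableSpace Ω} {i : ℕ} (hm : G i ≤ m0)
    {f : Ω → ℝ} (hf : MemLp f 2 μ) :
    MemLp (μ[f|G i]) 2 μ := by
  obtain ⟨g, hg⟩ : ∃ g : Lp ℝ 2 μ, g = (condExpL2 ℝ ℝ hm (hf.toLp f) : Lp ℝ 2 μ) := ⟨_, rfl⟩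
  have h2 : ∀ s : Set Ω, MeasurableSet[G i] s → μ s < ⊤ → IntegrableOn (g : Ω → ℝ) s μ :=
    fun s _ _ => ((Lp.memLp g).integrable one_le_two).integrableOn
  have h4 : AEStronglyMeasurable[G i] (g : Ω → ℝ) μ := by
    rw [hg]; exact aestronglyMeasurable_condExpL2 hm (hf.toLp f)
  have h3 : ∀ s : Set Ω, MeasurableSet[G i] s → μ s < ⊤ →
      ∫ x in s, (g : Ω → ℝ) x ∂μ = ∫ x in s, f x ∂μ := by
    intro s hs hμs
    rw [hg]
    rw [integral_condExpL2_eq (𝕜 := ℝ) hm (hf.toLp f) hs hμs.ne]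
    exact setIntegral_congr_ae (hm s hs) ((hf.coeFn_toLp).mono fun x hx _ => hx)
  have h : (g : Ω → ℝ) =ᵐ[μ] μ[f|G i] :=
    ae_eq_condExp_of_forall_setIntegral_eq (μ := μ) hm (hf.integrable one_le_two) h2 h3 h4
  exact (Lp.memLp g).ae_eq h

private lemma tendstoInMeasure_add' {f g : ℕ → Ω → ℝ} {a b : Ω → ℝ}
    (hf : TendstoInMeasure μ f atTop a) (hg : TendstoInMeasure μ g atTop b) :
    TendstoInMeasure μ (fun n ω => f n ω + g n ω) atTop (fun ω => a ω + b ω) := by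
  rw [tendstoInMeasure_iff_dist] at hf hg ⊢
  intro ε hε
  have hsub : ∀ n, {ω | ε ≤ dist (f n ω + g n ω) (a ω + b ω)} ⊆
      {ω | ε / 2 ≤ dist (f n ω) (a ω)} ∪ {ω | ε / 2 ≤ dist (g n ω) (b ω)} := by
    intro n ω hω
    simp only [Set.mem_setOf_eq] at hω
    by_contra hc
    simp only [Set.mem_union, Set.mem_setOf_eq, not_or, not_le] at hc
    have hd : dist (f n ω + g n ω) (a ω + b ω) ≤ dist (f n ω) (a ω) + dist (g n ω) (b ω) :=
      dist_add_add_le _ _ _ _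
    linarith [hc.1, hc.2]
  have h1 := hf (ε / 2) (by linarith)
  have h2 := hg (ε / 2) (by linarith)
  have hlim : Tendsto (fun n => μ {ω | ε / 2 ≤ dist (f n ω) (a ω)} +
      μ {ω | ε / 2 ≤ dist (g n ω) (b ω)}) atTop (𝓝 0) := by
    simpa using h1.add h2
  refine tendsto_of_tendsto_of_tendsto_of_le_of_le tendsto_const_nhds hlim
    (fun n => zero_le) (fun n => le_trans (measure_mono (hsub n)) (measure_union_le _ _))

private lemma integral_sq_sub_condexp_le {G : ℕ → MeasurableSpace Ω} {i : ℕ} (hm : G i ≤ m0)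
    {a : Ω → ℝ} (ha : MemLp a 2 μ) :
    ∫ ω, (a ω - (μ[a|G i]) ω) ^ 2 ∂μ ≤ ∫ ω, a ω ^ 2 ∂μ := by
  have hb2 : MemLp (μ[a|G i]) 2 μ := memLp_two_condexp hm ha
  have hmul : Integrable (fun ω => (μ[a|G i]) ω * a ω) μ := integrable_mul_memLp_two hb2 ha
  have hpull : μ[(fun ω => (μ[a|G i]) ω * a ω)|G i] =ᵐ[μ]
      fun ω => (μ[a|G i]) ω * (μ[a|G i]) ω :=
    condExp_mul_of_stronglyMeasurable_left stronglyMeasurable_condExp hmul (ha.integrable one_le_two)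
  have hiab : ∫ ω, (μ[a|G i]) ω * a ω ∂μ = ∫ ω, (μ[a|G i]) ω * (μ[a|G i]) ω ∂μ := by
    rw [← integral_condExp hm (f := fun ω => (μ[a|G i]) ω * a ω)]
    exact integral_congr_ae hpull
  have hsq : Integrable (fun ω => a ω ^ 2) μ := ha.integrable_sq
  have hbsq : Integrable (fun ω => (μ[a|G i]) ω ^ 2) μ := hb2.integrable_sq
  have h2 : ∫ ω, (a ω - (μ[a|G i]) ω) ^ 2 ∂μ =
      ∫ ω, a ω ^ 2 ∂μ - 2 * ∫ ω, (μ[a|G i]) ω * a ω ∂μ + ∫ ω, (μ[a|G i]) ω ^ 2 ∂μ := by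
    have hfe : (fun ω => (a ω - (μ[a|G i]) ω) ^ 2) =
        fun ω => a ω ^ 2 - 2 * ((μ[a|G i]) ω * a ω) + (μ[a|G i]) ω ^ 2 := by
      funext ω; ring
    have h1' : Integrable (fun ω => a ω ^ 2 - 2 * ((μ[a|G i]) ω * a ω)) μ :=
      hsq.sub (hmul.const_mul 2)
    rw [hfe, integral_add h1' hbsq, integral_sub hsq (hmul.const_mul 2), integral_const_mul]
  have hbb : ∫ ω, (μ[a|G i]) ω * (μ[a|G i]) ω ∂μ = ∫ ω, (μ[a|G i]) ω ^ 2 ∂μ := by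
    simp_rw [pow_two]
  have hpos : 0 ≤ ∫ ω, (μ[a|G i]) ω ^ 2 ∂μ := integral_nonneg fun ω => sq_nonneg _
  rw [h2, hiab, hbb]
  linarith

private lemma integral_sq_indicator_eq {G : ℕ → MeasurableSpace Ω} {i : ℕ} (hm : G i ≤ m0)
    {g : Ω → ℝ} {s : Set Ω} (hs : MeasurableSet[G i] s)
    (hg2 : Integrable (fun ω => g ω ^ 2) μ) :
    ∫ ω, (s.indicator g ω) ^ 2 ∂μ = ∫ ω, s.indicator (μ[fun ω' => g ω' ^ 2|G i]) ω ∂μ := by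
  have h1 : (fun ω => (s.indicator g ω) ^ 2) = s.indicator (fun ω' => g ω' ^ 2) := by
    funext ω
    by_cases h : ω ∈ s
    · rw [Set.indicator_of_mem h, Set.indicator_of_mem h]
    · rw [Set.indicator_of_notMem h, Set.indicator_of_notMem h]
      norm_num
  rw [h1, ← integral_condExp hm (f := s.indicator fun ω' => g ω' ^ 2)]
  exact integral_congr_ae (condExp_indicator hg2 hs)

private lemma integral_sq_sum_le {G : ℕ → MeasurableSpace Ω} (hG : ∀ k, G k ≤ m0)
    (hGm : Monotone G) (K : ℕ) (d : ℕ → Ω → ℝ)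
    (hd2 : ∀ k, MemLp (d k) 2 μ)
    (hdm : ∀ k, StronglyMeasurable[G k] (d k))
    (hd0 : ∀ k ∈ Finset.Icc 1 K, μ[d k|G (k - 1)] =ᵐ[μ] 0) :
    ∫ ω, (∑ k ∈ Finset.Icc 1 K, d k ω) ^ 2 ∂μ ≤ ∑ k ∈ Finset.Icc 1 K, ∫ ω, d k ω ^ 2 ∂μ := by
  have hcross : ∀ j ∈ Finset.Icc 1 K, ∀ k ∈ Finset.Icc 1 K, j < k →
      ∫ ω, d j ω * d k ω ∂μ = 0 := by
    intro j hj k hk hjk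
    have hjm := Finset.mem_Icc.mp hj
    have hsm : StronglyMeasurable[G (k - 1)] (d j) := (hdm j).mono (hGm (by omega))
    have hprod : Integrable (fun ω => d j ω * d k ω) μ :=
      integrable_mul_memLp_two (hd2 j) (hd2 k)
    have hpull : μ[(fun ω => d j ω * d k ω)|G (k - 1)] =ᵐ[μ]
        fun ω => d j ω * (μ[d k|G (k - 1)]) ω :=
      condExp_mul_of_stronglyMeasurable_left hsm hprod ((hd2 k).integrable one_le_two)
    have h0 : μ[(fun ω => d j ω * d k ω)|G (k - 1)] =ᵐ[μ] 0 := by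
      refine hpull.trans ?_
      filter_upwards [hd0 k hk] with ω hω
      simp only [Pi.zero_apply] at hω ⊢
      rw [hω, mul_zero]
    calc ∫ ω, d j ω * d k ω ∂μ
        = ∫ ω, (μ[(fun ω' => d j ω' * d k ω')|G (k - 1)]) ω ∂μ :=
          (integral_condExp (hG (k - 1)) (f := fun ω' => d j ω' * d k ω')).symm
      _ = 0 := by rw [integral_congr_ae h0]; simp
  have hexp : ∀ ω, (∑ k ∈ Finset.Icc 1 K, d k ω) ^ 2 =
      ∑ j ∈ Finset.Icc 1 K, ∑ k ∈ Finset.Icc 1 K, d j ω * d k ω := by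
    intro ω; rw [sq, Finset.sum_mul_sum]
  have hstep : ∫ ω, (∑ k ∈ Finset.Icc 1 K, d k ω) ^ 2 ∂μ =
      ∑ j ∈ Finset.Icc 1 K, ∑ k ∈ Finset.Icc 1 K, ∫ ω, d j ω * d k ω ∂μ := by
    simp_rw [hexp]
    rw [integral_finset_sum _ (fun j _ => integrable_finset_sum _
      (fun k _ => integrable_mul_memLp_two (hd2 j) (hd2 k)))]
    exact Finset.sum_congr rfl fun j _ => integral_finset_sum _
      (fun k _ => integrable_mul_memLp_two (hd2 j) (hd2 k))
  have hdiag : ∀ j ∈ Finset.Icc 1 K,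
      ∑ k ∈ Finset.Icc 1 K, ∫ ω, d j ω * d k ω ∂μ = ∫ ω, d j ω ^ 2 ∂μ := by
    intro j hj
    rw [Finset.sum_eq_single_of_mem j hj]
    · simp_rw [pow_two]
    · intro k hk hkj
      rcases lt_or_gt_of_ne hkj with h | h
      · have : ∫ ω, d j ω * d k ω ∂μ = ∫ ω, d k ω * d j ω ∂μ := by
          congr 1; funext ω; ring
        rw [this]
        exact hcross k hk j hj h
      · exact hcross j hj k hk h
  rw [hstep]
  exact le_of_eq (Finset.sum_congr rfl hdiag)

private lemma meas_abs_ge_le {h : Ω → ℝ} (hh2 : MemLp h 2 μ) {δ C : ℝ} (hδ : 0 < δ)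
    (hC : ∫ ω, h ω ^ 2 ∂μ ≤ C) :
    μ {ω | δ ≤ |h ω|} ≤ ENNReal.ofReal (C / δ ^ 2) := by
  have hint := hh2.integrable_sq
  have hcheb := mul_meas_ge_le_integral_of_nonneg (μ := μ)
    (Filter.Eventually.of_forall fun ω => sq_nonneg (h ω)) hint (δ ^ 2)
  have hsub : {ω | δ ≤ |h ω|} ⊆ {x | δ ^ 2 ≤ h x ^ 2} := by
    intro ω hω
    simp only [Set.mem_setOf_eq] at hω ⊢
    calc δ ^ 2 ≤ |h ω| ^ 2 := by nlinarith [abs_nonneg (h ω)]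
      _ = h ω ^ 2 := sq_abs _
  have hfin : μ {ω | δ ≤ |h ω|} ≠ ⊤ := measure_ne_top μ _
  rw [← ENNReal.ofReal_toReal hfin]
  apply ENNReal.ofReal_le_ofReal
  have h1 : (μ {ω | δ ≤ |h ω|}).toReal ≤ (μ {x | δ ^ 2 ≤ h x ^ 2}).toReal :=
    ENNReal.toReal_mono (measure_ne_top μ _) (measure_mono hsub)
  have hδ2 : (0:ℝ) < δ ^ 2 := by positivity
  rw [le_div_iff₀ hδ2]
  have h2 : (μ {x | δ ^ 2 ≤ h x ^ 2}).toReal * δ ^ 2 ≤ ∫ ω, h ω ^ 2 ∂μ := by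
    rw [mul_comm]; exact hcheb
  nlinarith [ENNReal.toReal_nonneg (a := μ {ω | δ ≤ |h ω|})]

private lemma key_bound {G : ℕ → MeasurableSpace Ω} (hG : ∀ k, G k ≤ m0) (hGm : Monotone G)
    (Kn : ℕ) (f : ℕ → Ω → ℝ) (hadp : ∀ k, Measurable[G k] (f k))
    (hi1 : ∀ k, Integrable (f k) μ) (hi2 : ∀ k, Integrable (fun ω => f k ω ^ 2) μ)
    {εr δ : ℝ} (hεr : 0 < εr) (hδ : 0 < δ) :
    μ {ω | δ ≤ |(∑ k ∈ Finset.Icc 1 Kn, f k ω) - ∑ k ∈ Finset.Icc 1 Kn, (μ[f k|G (k - 1)]) ω|}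
      ≤ μ {ω | εr ≤ |∑ k ∈ Finset.Icc 1 Kn, (μ[fun ω' => f k ω' ^ 2|G (k - 1)]) ω|}
        + ENNReal.ofReal (εr / δ ^ 2) := by
  set η : ℕ → Ω → ℝ := fun k => μ[fun ω' => f k ω' ^ 2|G (k - 1)] with hη
  set Bs : ℕ → Set Ω := fun k => {ω | ∑ j ∈ Finset.Icc 1 k, η j ω ≤ εr} with hBs
  set ξ' : ℕ → Ω → ℝ := fun k => (Bs k).indicator (f k) with hξ'
  have hηsm : ∀ k, StronglyMeasurable[G (k - 1)] (η k) := fun k => stronglyMeasurable_condExp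
  have hBmeas : ∀ k, MeasurableSet[G (k - 1)] (Bs k) := by
    intro k
    have hsum : Measurable[G (k - 1)] (fun ω => ∑ j ∈ Finset.Icc 1 k, η j ω) := by
      apply Finset.measurable_sum
      intro j hj
      exact ((hηsm j).measurable).mono
        (hGm (Nat.sub_le_sub_right (Finset.mem_Icc.mp hj).2 1)) le_rfl
    exact measurableSet_le hsum measurable_const
  have hfm0 : ∀ k, AEStronglyMeasurable (f k) μ :=
    fun k => ((hadp k).mono (hG k) le_rfl).aestronglyMeasurable
  have hf2 : ∀ k, MemLp (f k) 2 μ :=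
    fun k => (memLp_two_iff_integrable_sq (hfm0 k)).mpr (hi2 k)
  have hBmeas0 : ∀ k, MeasurableSet (Bs k) := fun k => hG (k - 1) _ (hBmeas k)
  have hξ'2 : ∀ k, MemLp (ξ' k) 2 μ := fun k =>
    (hf2 k).of_le ((hf2 k).1.indicator (hBmeas0 k))
      (Filter.Eventually.of_forall fun ω => norm_indicator_le_norm_self _ _)
  have hξ'int : ∀ k, Integrable (ξ' k) μ := fun k => (hξ'2 k).integrable one_le_two
  set d : ℕ → Ω → ℝ := fun k ω => ξ' k ω - (μ[ξ' k|G (k - 1)]) ω with hd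
  have hd2 : ∀ k, MemLp (d k) 2 μ :=
    fun k => (hξ'2 k).sub (memLp_two_condexp (hG (k - 1)) (hξ'2 k))
  have hdm : ∀ k, StronglyMeasurable[G k] (d k) := by
    intro k
    have h1 : StronglyMeasurable[G k] (ξ' k) :=
      ((hadp k).stronglyMeasurable).indicator (hGm (Nat.sub_le k 1) _ (hBmeas k))
    have h2 : StronglyMeasurable[G k] (μ[ξ' k|G (k - 1)]) :=
      stronglyMeasurable_condExp.mono (hGm (Nat.sub_le k 1))
    exact h1.sub h2
  have hd0 : ∀ k ∈ Finset.Icc 1 Kn, μ[d k|G (k - 1)] =ᵐ[μ] 0 := by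
    intro k _
    have h1 : μ[d k|G (k - 1)] =ᵐ[μ]
        μ[ξ' k|G (k - 1)] - μ[μ[ξ' k|G (k - 1)]|G (k - 1)] :=
      condExp_sub (hξ'int k) integrable_condExp _
    have h2 : μ[μ[ξ' k|G (k - 1)]|G (k - 1)] = μ[ξ' k|G (k - 1)] :=
      condExp_of_stronglyMeasurable (hG (k - 1)) stronglyMeasurable_condExp integrable_condExp
    filter_upwards [h1] with ω hω
    rw [Pi.zero_apply, hω, Pi.sub_apply, h2, sub_self]
  -- second moment bound for the martingale sum
  have hsumsq : ∫ ω, (∑ k ∈ Finset.Icc 1 Kn, d k ω) ^ 2 ∂μ ≤ εr := by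
    have hind_int : ∀ k, Integrable ((Bs k).indicator (η k)) μ :=
      fun k => integrable_condExp.indicator (hBmeas0 k)
    calc ∫ ω, (∑ k ∈ Finset.Icc 1 Kn, d k ω) ^ 2 ∂μ
        ≤ ∑ k ∈ Finset.Icc 1 Kn, ∫ ω, d k ω ^ 2 ∂μ :=
          integral_sq_sum_le hG hGm Kn d hd2 hdm hd0
      _ ≤ ∑ k ∈ Finset.Icc 1 Kn, ∫ ω, (Bs k).indicator (η k) ω ∂μ := by
          refine Finset.sum_le_sum fun k _ => ?_
          calc ∫ ω, d k ω ^ 2 ∂μ ≤ ∫ ω, ξ' k ω ^ 2 ∂μ :=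
                integral_sq_sub_condexp_le (hG (k - 1)) (hξ'2 k)
            _ = ∫ ω, (Bs k).indicator (η k) ω ∂μ :=
                integral_sq_indicator_eq (hG (k - 1)) (hBmeas k) (hi2 k)
      _ ≤ εr := by
          rw [← integral_finset_sum _ (fun k _ => hind_int k)]
          have hae : ∀ᵐ ω ∂μ, ∑ k ∈ Finset.Icc 1 Kn, (Bs k).indicator (η k) ω ≤ εr := by
            have hnn : ∀ᵐ ω ∂μ, ∀ j, 0 ≤ η j ω :=
              ae_all_iff.mpr fun j =>
                condExp_nonneg (Filter.Eventually.of_forall fun ω => sq_nonneg _)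
            filter_upwards [hnn] with ω hω
            have hkey := (aux_sum_if_le εr hεr.le (fun j => η j ω) Kn (fun j _ => hω j)).1
            refine le_trans (le_of_eq (Finset.sum_congr rfl fun k _ => ?_)) hkey
            by_cases h : ω ∈ Bs k
            · have h' : ∑ j ∈ Finset.Icc 1 k, η j ω ≤ εr := h
              rw [Set.indicator_of_mem h, if_pos h']
            · have h' : ¬ (∑ j ∈ Finset.Icc 1 k, η j ω ≤ εr) := h
              rw [Set.indicator_of_notMem h, if_neg h']
          calc ∫ ω, ∑ k ∈ Finset.Icc 1 Kn, (Bs k).indicator (η k) ω ∂μ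
              ≤ ∫ _, εr ∂μ :=
                integral_mono_ae (integrable_finset_sum _ fun k _ => hind_int k)
                  (integrable_const εr) hae
            _ = εr := by simp
  have hcheb : μ {ω | δ ≤ |∑ k ∈ Finset.Icc 1 Kn, d k ω|} ≤ ENNReal.ofReal (εr / δ ^ 2) :=
    meas_abs_ge_le (memLp_finset_sum (μ := μ) _ fun k _ => hd2 k) hδ hsumsq
  -- on the good set, the two sums agree
  have hgood : ∀ᵐ ω ∂μ, ω ∈ Bs Kn →
      (∑ k ∈ Finset.Icc 1 Kn, f k ω) - ∑ k ∈ Finset.Icc 1 Kn, (μ[f k|G (k - 1)]) ω =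
        ∑ k ∈ Finset.Icc 1 Kn, d k ω := by
    have hnn : ∀ᵐ ω ∂μ, ∀ j, 0 ≤ η j ω :=
      ae_all_iff.mpr fun j => condExp_nonneg (Filter.Eventually.of_forall fun ω => sq_nonneg _)
    have hce : ∀ᵐ ω ∂μ, ∀ k, (μ[ξ' k|G (k - 1)]) ω = (Bs k).indicator (μ[f k|G (k - 1)]) ω :=
      ae_all_iff.mpr fun k => condExp_indicator (hi1 k) (hBmeas k)
    filter_upwards [hnn, hce] with ω hω hceω hmem
    have hBk : ∀ k ∈ Finset.Icc 1 Kn, ω ∈ Bs k := by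
      intro k hk
      have hsub : Finset.Icc 1 k ⊆ Finset.Icc 1 Kn :=
        Finset.Icc_subset_Icc_right (Finset.mem_Icc.mp hk).2
      have hle2 : ∑ j ∈ Finset.Icc 1 k, η j ω ≤ ∑ j ∈ Finset.Icc 1 Kn, η j ω :=
        Finset.sum_le_sum_of_subset_of_nonneg hsub (fun j _ _ => hω j)
      have hmem' : ∑ j ∈ Finset.Icc 1 Kn, η j ω ≤ εr := hmem
      exact le_trans hle2 hmem'
    rw [← Finset.sum_sub_distrib]
    refine Finset.sum_congr rfl fun k hk => ?_
    have h1 : ξ' k ω = f k ω := Set.indicator_of_mem (hBk k hk) _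
    have h2 : (μ[ξ' k|G (k - 1)]) ω = (μ[f k|G (k - 1)]) ω := by
      rw [hceω k, Set.indicator_of_mem (hBk k hk)]
    show f k ω - (μ[f k|G (k - 1)]) ω = ξ' k ω - (μ[ξ' k|G (k - 1)]) ω
    rw [h1, h2]
  -- assembly
  set A : Set Ω :=
    {ω | δ ≤ |(∑ k ∈ Finset.Icc 1 Kn, f k ω) - ∑ k ∈ Finset.Icc 1 Kn, (μ[f k|G (k - 1)]) ω|}
    with hA
  have hsplit : μ A ≤ μ (A ∩ Bs Kn) + μ (A \ Bs Kn) := measure_le_inter_add_diff μ A (Bs Kn)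
  have h_a : μ (A ∩ Bs Kn) ≤ μ {ω | δ ≤ |∑ k ∈ Finset.Icc 1 Kn, d k ω|} := by
    apply measure_mono_ae
    filter_upwards [hgood] with ω hg
    intro hmem
    obtain ⟨h1, h2⟩ := hmem
    have h1' : δ ≤ |(∑ k ∈ Finset.Icc 1 Kn, f k ω) -
        ∑ k ∈ Finset.Icc 1 Kn, (μ[f k|G (k - 1)]) ω| := h1
    show δ ≤ |∑ k ∈ Finset.Icc 1 Kn, d k ω|
    rw [← hg h2]
    exact h1'
  have h_b : μ (A \ Bs Kn) ≤ μ {ω | εr ≤ |∑ k ∈ Finset.Icc 1 Kn, η k ω|} := by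
    apply measure_mono
    intro ω hω
    have hnotB : ω ∉ Bs Kn := hω.2
    have hlt : εr < ∑ j ∈ Finset.Icc 1 Kn, η j ω := by
      by_contra hcon
      exact hnotB (by simpa [hBs] using not_lt.mp hcon)
    show εr ≤ |∑ k ∈ Finset.Icc 1 Kn, η k ω|
    exact le_trans hlt.le (le_abs_self _)
  calc μ A ≤ μ (A ∩ Bs Kn) + μ (A \ Bs Kn) := hsplit
    _ ≤ μ {ω | δ ≤ |∑ k ∈ Finset.Icc 1 Kn, d k ω|}
        + μ {ω | εr ≤ |∑ k ∈ Finset.Icc 1 Kn, η k ω|} := add_le_add h_a h_b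
    _ ≤ ENNReal.ofReal (εr / δ ^ 2)
        + μ {ω | εr ≤ |∑ k ∈ Finset.Icc 1 Kn, η k ω|} := add_le_add_left hcheb _
    _ = μ {ω | εr ≤ |∑ k ∈ Finset.Icc 1 Kn, η k ω|} + ENNReal.ofReal (εr / δ ^ 2) :=
        add_comm _ _

end AuxLLN

theorem stmt_8 {Ω : Type*} [m0 : MeasurableSpace Ω] (μ : Measure Ω) [IsProbabilityMeasure μ]
    (𝒢 : ℕ → ℕ → MeasurableSpace Ω) (hle : ∀ n k, 𝒢 n k ≤ m0)
    (hmono : ∀ n, Monotone (𝒢 n))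
    (K : ℕ → ℕ) (ξ : ℕ → ℕ → Ω → ℝ)
    (hnn : ∀ n k ω, 0 ≤ ξ n k ω)
    (hadapted : ∀ n k, Measurable[𝒢 n k] (ξ n k))
    (hint : ∀ n k, Integrable (ξ n k) μ)
    (hint2 : ∀ n k, Integrable (fun ω => (ξ n k ω)^2) μ)
    (R : Ω → ℝ)
    (h1 : TendstoInMeasure μ
      (fun n ω => ∑ k ∈ Finset.Icc 1 (K n), (μ[ξ n k | 𝒢 n (k - 1)]) ω) atTop R)
    (h2 : TendstoInMeasure μ
      (fun n ω => ∑ k ∈ Finset.Icc 1 (K n), (μ[fun ω' => (ξ n k ω')^2 | 𝒢 n (k - 1)]) ω)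
      atTop (fun _ => (0 : ℝ))) :
    TendstoInMeasure μ (fun n ω => ∑ k ∈ Finset.Icc 1 (K n), ξ n k ω) atTop R := by
  have key : ∀ (n : ℕ) {εr δ : ℝ}, 0 < εr → 0 < δ →
      μ {ω | δ ≤ dist ((∑ k ∈ Finset.Icc 1 (K n), ξ n k ω)
          - ∑ k ∈ Finset.Icc 1 (K n), (μ[ξ n k|𝒢 n (k - 1)]) ω) 0}
        ≤ μ {ω | εr ≤ dist (∑ k ∈ Finset.Icc 1 (K n),
            (μ[fun ω' => (ξ n k ω')^2|𝒢 n (k - 1)]) ω) 0}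
          + ENNReal.ofReal (εr / δ ^ 2) := by
    intro n εr δ hεr hδ
    simp only [Real.dist_eq, sub_zero]
    exact key_bound (hle n) (hmono n) (K n) (ξ n) (hadapted n) (hint n) (hint2 n) hεr hδ
  have hM : TendstoInMeasure μ (fun n ω => (∑ k ∈ Finset.Icc 1 (K n), ξ n k ω)
      - ∑ k ∈ Finset.Icc 1 (K n), (μ[ξ n k|𝒢 n (k - 1)]) ω) atTop (fun _ => (0 : ℝ)) := by
    rw [tendstoInMeasure_iff_dist]
    intro δ hδ
    rw [ENNReal.tendsto_atTop_zero]
    intro c hc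
    set c' : ENNReal := min c 1 with hc'
    have hc'pos : 0 < c' := lt_min hc (by norm_num)
    have hc'top : c' ≠ ⊤ := ne_top_of_le_ne_top (by norm_num) (min_le_right c 1)
    have hhalf_ne : c' / 2 ≠ ⊤ := (ENNReal.div_lt_top hc'top (by norm_num)).ne
    have hhalf_pos : 0 < c' / 2 := ENNReal.half_pos hc'pos.ne'
    set εr : ℝ := δ ^ 2 * (c' / 2).toReal with hεrdef
    have htoRpos : 0 < (c' / 2).toReal := ENNReal.toReal_pos hhalf_pos.ne' hhalf_ne
    have hεrpos : 0 < εr := mul_pos (by positivity) htoRpos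
    have hofr : ENNReal.ofReal (εr / δ ^ 2) = c' / 2 := by
      rw [hεrdef, mul_comm, mul_div_assoc, div_self (by positivity : (δ:ℝ) ^ 2 ≠ 0), mul_one,
        ENNReal.ofReal_toReal hhalf_ne]
    obtain ⟨N, hN⟩ := ENNReal.tendsto_atTop_zero.mp (tendstoInMeasure_iff_dist.mp h2 εr hεrpos) (c' / 2) hhalf_pos
    refine ⟨N, fun n hn => ?_⟩
    refine le_trans (key n hεrpos hδ) ?_
    calc μ {ω | εr ≤ dist (∑ k ∈ Finset.Icc 1 (K n),
            (μ[fun ω' => (ξ n k ω')^2|𝒢 n (k - 1)]) ω) 0} + ENNReal.ofReal (εr / δ ^ 2)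
        ≤ c' / 2 + c' / 2 := add_le_add (hN n hn) (le_of_eq hofr)
      _ = c' := ENNReal.add_halves c'
      _ ≤ c := min_le_left _ _
  have hfinal := tendstoInMeasure_add' hM h1
  refine TendstoInMeasure.congr (fun n => Filter.Eventually.of_forall fun ω => ?_)
    (Filter.Eventually.of_forall fun ω => ?_) hfinal
  · ring
  · simp
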